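/- Monotonicity of the signature assignment along a strategy: with s(·,Σ) defined inductively (at an active node u with priority j and child u', s(u,Σ) is obtained from s(u',Σ) by incrementing coordinate j by one and zeroing later coordinates; at a non-active node u, s(u,Σ) is the coordinatewise-supremum-free lexicographic supremum of s(w,Σ) over the ⪯-minimal active descendants w of u), the function s(·,Σ) is monotone: if u ⪯ w are both in Σ then s(u,Σ) ≥_lex s(w,Σ). -/
import Mathlib


namespace UnambSig

/-- The symbols of the alphabet `A^~_{i,k}`: unary priority symbols `p j`,
binary choice symbols of the two players (`true` is player 1), and the unary
player-swapping symbol `~`. -/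
inductive Sym where
  | pri : ℕ → Sym
  | choice : Bool → Sym
  | neg : Sym
deriving DecidableEq

/-- Arity of a symbol. -/
def Sym.arity : Sym → ℕ
  | .pri _ => 1
  | .choice _ => 2
  | .neg => 1

/-- A labelling of potential tree nodes (lists of directions, from the root). -/
abbrev Label := List ℕ → Option Sym

/-- `t` is a tree over the alphabet `A^~_{i,k}`: the root is defined, children
match arities, the domain is closed and priorities are within `{i,…,k}`. -/
def IsTree (t : Label) (i k : ℕ) : Prop :=
  t [] ≠ none ∧
  (∀ u s, t u = some s → ∀ d : ℕ, (t (u ++ [d]) ≠ none ↔ d < s.arity)) ∧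
  (∀ u (d : ℕ), t u = none → t (u ++ [d]) = none) ∧
  (∀ u j, t u = some (Sym.pri j) → i ≤ j ∧ j ≤ k)

/-- The number of strict ancestors of `u` labelled by `~`. -/
def tildeCount (t : Label) (u : List ℕ) : ℕ :=
  (List.range u.length).countP (fun m => decide (t (u.take m) = some Sym.neg))

/-- A node is kept if it has an even number of `~`-labelled strict ancestors. -/
def kept (t : Label) (u : List ℕ) : Prop := tildeCount t u % 2 = 0

instance (t : Label) (u : List ℕ) : Decidable (kept t u) := by
  unfold kept; infer_instance

/-- The node of a branch `α` at depth `n`. -/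
def pref (α : ℕ → ℕ) (n : ℕ) : List ℕ := (List.range n).map α

/-- `α` is an infinite branch of `t`. -/
def IsBranch (t : Label) (α : ℕ → ℕ) : Prop := ∀ n, t (pref α n) ≠ none

/-- `t` is well-formed: no branch contains infinitely many `~`. -/
def WellFormed (t : Label) : Prop :=
  ∀ α : ℕ → ℕ, IsBranch t α → {n : ℕ | t (pref α n) = some Sym.neg}.Finite

/-- `t` is a well-formed tree over `A^~_{i,k}`. -/
def GoodTree (t : Label) (i k : ℕ) : Prop := IsTree t i k ∧ WellFormed t

/-- The effective priority of a node: the labelled priority, shifted by one at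
switched nodes (each `~` swaps the players). -/
def effPri (t : Label) (u : List ℕ) : Option ℕ :=
  match t u with
  | some (Sym.pri j) => some (if kept t u then j else j + 1)
  | _ => none

/-- The player controlling a node: the player named by the choice symbol,
swapped if the node is switched. -/
def ctrl (t : Label) (u : List ℕ) : Option Bool :=
  match t u with
  | some (Sym.choice Q) => some (if kept t u then Q else !Q)
  | _ => none

/-- The effective priority `j` appears infinitely often on the branch `α`. -/
def InfOften (t : Label) (α : ℕ → ℕ) (j : ℕ) : Prop :=
  {n : ℕ | effPri t (pref α n) = some j}.Infinite

/-- The branch `α` is winning for player `P` in the game `G(t)`: the least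
effective priority occurring infinitely often has the parity favourable to `P`
(even for player 1 = `true`). -/
def WinsBranch (t : Label) (P : Bool) (α : ℕ → ℕ) : Prop :=
  ∃ j, InfOften t α j ∧ (∀ j' < j, ¬ InfOften t α j') ∧ (Even j ↔ P = true)

/-- A strategy of player `P` in `G(t)`, identified (since the arena is a tree)
with a prefix-closed set of nodes: deterministic at `P`'s positions and full at
the other positions. -/
def IsStrategy (t : Label) (P : Bool) (S : List ℕ → Prop) : Prop :=
  S [] ∧
  (∀ u, S u → t u ≠ none) ∧
  (∀ u (d : ℕ), S (u ++ [d]) → S u) ∧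
  (∀ u, S u → ctrl t u = some P → ∃! d : ℕ, S (u ++ [d])) ∧
  (∀ u (d : ℕ), S u → ctrl t u ≠ some P → t (u ++ [d]) ≠ none → S (u ++ [d]))

/-- An infinite play of `S`: a branch all of whose prefixes belong to `S`. -/
def IsPlayOf (S : List ℕ → Prop) (α : ℕ → ℕ) : Prop := ∀ n, S (pref α n)

/-- A winning strategy of `P`: all its infinite plays are winning for `P`. -/
def IsWinningStrategy (t : Label) (P : Bool) (S : List ℕ → Prop) : Prop :=
  IsStrategy t P S ∧ ∀ α, IsPlayOf S α → WinsBranch t P α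

/-- `j` is a `P`-losing priority: within `{i,…,k}` and of the parity
unfavourable to `P` (odd for player 1 = `true`). -/
def PLosing (i k : ℕ) (P : Bool) (j : ℕ) : Prop :=
  i ≤ j ∧ j ≤ k ∧ (Odd j ↔ P = true)

/-- `j` is a `P`-winning priority. -/
def PWinning (i k : ℕ) (P : Bool) (j : ℕ) : Prop :=
  i ≤ j ∧ j ≤ k ∧ ¬ (Odd j ↔ P = true)

/-- A position `u` of the strategy `S` is active: it carries a `P`-losing
priority `j` and no strict ancestor is labelled `~` or by a smaller priority. -/
def Active (t : Label) (i k : ℕ) (P : Bool) (S : List ℕ → Prop) (u : List ℕ) : Prop :=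
  S u ∧ ∃ j, t u = some (Sym.pri j) ∧ PLosing i k P j ∧
    ∀ w, w <+: u → w ≠ u →
      (t w ≠ some Sym.neg ∧ ∀ j', t w = some (Sym.pri j') → j ≤ j')

/-- `w` is a `⪯`-minimal active position above `u` (an element of `suk_u(Σ)`). -/
def Suk (t : Label) (i k : ℕ) (P : Bool) (S : List ℕ → Prop) (u w : List ℕ) : Prop :=
  Active t i k P S w ∧ u <+: w ∧
    ∀ w', Active t i k P S w' → u <+: w' → w' <+: w → w' = w

/-- The relation `u ≫ w` associated with the strategy `S`. -/
def Gg (t : Label) (i k : ℕ) (P : Bool) (S : List ℕ → Prop) (u w : List ℕ) : Prop :=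
  S u ∧ S w ∧ u <+: w ∧ u ≠ w ∧
    ∃ w', Active t i k P S w' ∧ u <+: w' ∧ w' <+: w

/-- Lexicographic strict order on `P`-signatures (tuples of ordinals indexed by
the `P`-losing priorities; smaller indices are more significant). -/
def sigLt (i k : ℕ) (P : Bool) (σ τ : ℕ → Ordinal) : Prop :=
  ∃ j, PLosing i k P j ∧ σ j < τ j ∧
    ∀ j', PLosing i k P j' → j' < j → σ j' = τ j'

/-- Equality of `P`-signatures (on the relevant coordinates). -/
def sigEq (i k : ℕ) (P : Bool) (σ τ : ℕ → Ordinal) : Prop :=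
  ∀ j, PLosing i k P j → σ j = τ j

/-- Lexicographic order on `P`-signatures. -/
def sigLe (i k : ℕ) (P : Bool) (σ τ : ℕ → Ordinal) : Prop :=
  sigLt i k P σ τ ∨ sigEq i k P σ τ

/-- Lexicographic strict order on prefixes `σ↾ℓ` of `P`-signatures. -/
def sigLtBelow (i k : ℕ) (P : Bool) (ℓ : ℕ) (σ τ : ℕ → Ordinal) : Prop :=
  ∃ j, PLosing i k P j ∧ j ≤ ℓ ∧ σ j < τ j ∧
    ∀ j', PLosing i k P j' → j' < j → σ j' = τ j'

/-- Equality of the prefixes `σ↾ℓ`. -/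
def sigEqBelow (i k : ℕ) (P : Bool) (ℓ : ℕ) (σ τ : ℕ → Ordinal) : Prop :=
  ∀ j, PLosing i k P j → j ≤ ℓ → σ j = τ j

/-- Lexicographic order on the prefixes `σ↾ℓ`. -/
def sigLeBelow (i k : ℕ) (P : Bool) (ℓ : ℕ) (σ τ : ℕ → Ordinal) : Prop :=
  sigLtBelow i k P ℓ σ τ ∨ sigEqBelow i k P ℓ σ τ

/-- Order on signatures extended by `∞` (represented by `none`) as maximum. -/
def extLe (i k : ℕ) (P : Bool) : Option (ℕ → Ordinal) → Option (ℕ → Ordinal) → Prop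
  | _, none => True
  | none, some _ => False
  | some σ, some τ => sigLe i k P σ τ

/-- Equality of signatures extended by `∞`. -/
def extEq (i k : ℕ) (P : Bool) : Option (ℕ → Ordinal) → Option (ℕ → Ordinal) → Prop
  | none, none => True
  | some σ, some τ => sigEq i k P σ τ
  | _, _ => False

/-- Order on prefixes `σ↾ℓ` of signatures extended by `∞`. -/
def extLeBelow (i k : ℕ) (P : Bool) (ℓ : ℕ) :
    Option (ℕ → Ordinal) → Option (ℕ → Ordinal) → Prop
  | _, none => True
  | none, some _ => False
  | some σ, some τ => sigLeBelow i k P ℓ σ τ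

/-- Strict order on prefixes `σ↾ℓ` of signatures extended by `∞`. -/
def extLtBelow (i k : ℕ) (P : Bool) (ℓ : ℕ) :
    Option (ℕ → Ordinal) → Option (ℕ → Ordinal) → Prop
  | none, _ => False
  | some _, none => True
  | some σ, some τ => sigLtBelow i k P ℓ σ τ

/-- `s` is the signature assignment `s(·,Σ)` of the strategy `S`: at an active
node with priority `j`, the coordinate `j` of the child's value is incremented
by one and the later coordinates are zeroed; at a non-active node of `S`, the
value is the least upper bound (in the lexicographic order) of the values at
the `⪯`-minimal active descendants. -/
def SigDef (t : Label) (i k : ℕ) (P : Bool) (S : List ℕ → Prop)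
    (s : List ℕ → ℕ → Ordinal) : Prop :=
  (∀ u j, Active t i k P S u → t u = some (Sym.pri j) →
    ∀ j', PLosing i k P j' →
      (j' < j → s u j' = s (u ++ [0]) j') ∧
      (j' = j → s u j' = s (u ++ [0]) j + 1) ∧
      (j < j' → s u j' = 0)) ∧
  (∀ u, S u → ¬ Active t i k P S u →
    (∀ w, Suk t i k P S u w → sigLe i k P (s w) (s u)) ∧
    (∀ τ, (∀ w, Suk t i k P S u w → sigLe i k P (s w) τ) → sigLe i k P (s u) τ))

/-- The subtree of `t` rooted at `u`. -/
def subtree (t : Label) (u : List ℕ) : Label := fun w => t (u ++ w)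

/-- The tree with a unary root symbol `s` and subtree `t`. -/
def node1 (s : Sym) (t : Label) : Label := fun u =>
  match u with
  | [] => some s
  | 0 :: w => t w
  | _ => none

/-- The tree with root the binary choice symbol of player `b` and the given
left and right subtrees. -/
def node2 (b : Bool) (tL tR : Label) : Label := fun u =>
  match u with
  | [] => some (Sym.choice b)
  | 0 :: w => tL w
  | 1 :: w => tR w
  | _ => none

/-- `σ` is the value `s(ε,Σ)` of some winning strategy `Σ` of `P` in `G(t)`. -/
def ValOf (t : Label) (i k : ℕ) (P : Bool) (σ : ℕ → Ordinal) : Prop :=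
  ∃ (S : List ℕ → Prop) (s : List ℕ → ℕ → Ordinal),
    IsWinningStrategy t P S ∧ SigDef t i k P S s ∧ sigEq i k P σ (s [])

/-- `σ` is the signature `σ_P(t)`: the lexicographic infimum (= minimum) of the
values of the winning strategies of `P` in `G(t)`. -/
def IsSigOf (t : Label) (i k : ℕ) (P : Bool) (σ : ℕ → Ordinal) : Prop :=
  ValOf t i k P σ ∧ ∀ τ, ValOf t i k P τ → sigLe i k P σ τ

/-- `a` is the extended signature `σ_P(t)`, with `none` representing `∞`
(no winning strategy of `P` exists). -/
def IsExtSigOf (t : Label) (i k : ℕ) (P : Bool) : Option (ℕ → Ordinal) → Prop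
  | none => ¬ ∃ S : List ℕ → Prop, IsWinningStrategy t P S
  | some σ => IsSigOf t i k P σ

/-- The six invariants of the signature lemma for a pair of assignments
`σ' : Bool → Label → Option (ℕ → Ordinal)` (with `none` playing the role of
`∞`): (1) `σ'_P(t) = ∞` iff `P` loses `G(t)`; (2) `σ'_P(~(t)) = (0,…,0)` if `P`
wins `G(~(t))`; (3) prepending a `P`-winning priority `j` keeps the coordinates
below `j` and zeroes the ones `≥ j`; (4) prepending a `P`-losing priority `j`
increments coordinate `j` and zeroes the later ones; (5) the min rule at `P`'s
choice nodes; (6) the max rule at the opponent's choice nodes. -/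
def SigInvariants (i k : ℕ) (σ' : Bool → Label → Option (ℕ → Ordinal)) : Prop :=
  (∀ (P : Bool) (t : Label), GoodTree t i k →
    (σ' P t = none ↔ ¬ ∃ S : List ℕ → Prop, IsWinningStrategy t P S)) ∧
  (∀ (P : Bool) (t : Label), GoodTree t i k →
    (∃ S : List ℕ → Prop, IsWinningStrategy (node1 Sym.neg t) P S) →
    ∃ τ, σ' P (node1 Sym.neg t) = some τ ∧ ∀ j, PLosing i k P j → τ j = 0) ∧
  (∀ (P : Bool) (t : Label) (j : ℕ) (τ : ℕ → Ordinal), GoodTree t i k →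
    PWinning i k P j → σ' P t = some τ →
    ∃ τ', σ' P (node1 (Sym.pri j) t) = some τ' ∧ ∀ j', PLosing i k P j' →
      (j' < j → τ' j' = τ j') ∧ (j ≤ j' → τ' j' = 0)) ∧
  (∀ (P : Bool) (t : Label) (j : ℕ) (τ : ℕ → Ordinal), GoodTree t i k →
    PLosing i k P j → σ' P t = some τ →
    ∃ τ', σ' P (node1 (Sym.pri j) t) = some τ' ∧ ∀ j', PLosing i k P j' →
      (j' < j → τ' j' = τ j') ∧ (j' = j → τ' j' = τ j + 1) ∧ (j < j' → τ' j' = 0)) ∧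
  (∀ (P : Bool) (tL tR : Label), GoodTree tL i k → GoodTree tR i k →
    (extLe i k P (σ' P tL) (σ' P tR) →
      extEq i k P (σ' P (node2 P tL tR)) (σ' P tL)) ∧
    (extLe i k P (σ' P tR) (σ' P tL) →
      extEq i k P (σ' P (node2 P tL tR)) (σ' P tR))) ∧
  (∀ (P : Bool) (tL tR : Label), GoodTree tL i k → GoodTree tR i k →
    (extLe i k P (σ' P tL) (σ' P tR) →
      extEq i k P (σ' P (node2 (!P) tL tR)) (σ' P tR)) ∧
    (extLe i k P (σ' P tR) (σ' P tL) →
      extEq i k P (σ' P (node2 (!P) tL tR)) (σ' P tL)))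

/-- `S` is a `σ'`-optimal strategy of `P` in `G(t)`: at each position controlled
by `P` it moves to a subtree of lexicographically minimal `σ'`-value for the
appropriate player (depending on whether the position is kept or switched). -/
def IsOptimal (t : Label) (i k : ℕ) (P : Bool)
    (σ' : Bool → Label → Option (ℕ → Ordinal)) (S : List ℕ → Prop) : Prop :=
  IsStrategy t P S ∧
  ∀ u (d : ℕ), S u → ctrl t u = some P → S (u ++ [d]) →
    ∀ d' : ℕ, t (u ++ [d']) ≠ none →
      extLe i k (if kept t u then P else !P)
        (σ' (if kept t u then P else !P) (subtree t (u ++ [d])))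
        (σ' (if kept t u then P else !P) (subtree t (u ++ [d'])))

/-- A partial strategy of `P`: a `P`-deterministic behaviour (nonempty,
prefix-closed, without maximal elements, deterministic at `P`'s positions). -/
def IsPartialStrategy (t : Label) (P : Bool) (S : List ℕ → Prop) : Prop :=
  S [] ∧
  (∀ u, S u → t u ≠ none) ∧
  (∀ u (d : ℕ), S (u ++ [d]) → S u) ∧
  (∀ u, S u → ctrl t u = some P → ∃! d : ℕ, S (u ++ [d])) ∧
  (∀ u, S u → ∃ d : ℕ, S (u ++ [d]))

/-- The position `u` is not reachable by the partial strategy `S` of `P`: it is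
a child, outside `S`, of an opponent position of `S`. -/
def NotReachable (t : Label) (P : Bool) (S : List ℕ → Prop) (u : List ℕ) : Prop :=
  ∃ (w : List ℕ) (d : ℕ), u = w ++ [d] ∧ S w ∧ ¬ S u ∧ t u ≠ none ∧ ctrl t w = some (!P)

private lemma sigLe_refl (i k : ℕ) (P : Bool) (σ : ℕ → Ordinal) : sigLe i k P σ σ :=
  Or.inr fun _ _ => rfl

private lemma sigLe_trans {i k : ℕ} {P : Bool} {σ τ ρ : ℕ → Ordinal}
    (h1 : sigLe i k P σ τ) (h2 : sigLe i k P τ ρ) : sigLe i k P σ ρ := by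
  rcases h1 with ⟨j1, hl1, hlt1, heq1⟩ | he1
  · rcases h2 with ⟨j2, hl2, hlt2, heq2⟩ | he2
    · rcases lt_trichotomy j1 j2 with h | rfl | h
      · exact Or.inl ⟨j1, hl1, by rw [← heq2 j1 hl1 h]; exact hlt1,
          fun j' hj' hj'lt => (heq1 j' hj' hj'lt).trans (heq2 j' hj' (hj'lt.trans h))⟩
      · exact Or.inl ⟨j1, hl1, hlt1.trans hlt2,
          fun j' hj' hj'lt => (heq1 j' hj' hj'lt).trans (heq2 j' hj' hj'lt)⟩
      · exact Or.inl ⟨j2, hl2, by rw [heq1 j2 hl2 h]; exact hlt2,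
          fun j' hj' hj'lt => (heq1 j' hj' (hj'lt.trans h)).trans (heq2 j' hj' hj'lt)⟩
    · exact Or.inl ⟨j1, hl1, by rw [← he2 j1 hl1]; exact hlt1,
        fun j' hj' hj'lt => (heq1 j' hj' hj'lt).trans (he2 j' hj')⟩
  · rcases h2 with ⟨j2, hl2, hlt2, heq2⟩ | he2
    · exact Or.inl ⟨j2, hl2, by rw [he1 j2 hl2]; exact hlt2,
        fun j' hj' hj'lt => (he1 j' hj').trans (heq2 j' hj' hj'lt)⟩
    · exact Or.inr fun j hj => (he1 j hj).trans (he2 j hj)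

private lemma strat_prefix_closed {t : Label} {P : Bool} {S : List ℕ → Prop}
    (hS : IsStrategy t P S) : ∀ v u : List ℕ, S (u ++ v) → S u := by
  intro v
  induction v using List.reverseRecOn with
  | nil => intro u h; simpa using h
  | append_singleton v d ih =>
      intro u h
      rw [← List.append_assoc] at h
      exact ih u (hS.2.2.1 _ d h)

private lemma prefix_sandwich {u w' : List ℕ} {d : ℕ}
    (h1 : u <+: w') (h2 : w' <+: u ++ [d]) : w' = u ∨ w' = u ++ [d] := by
  have l1 := h1.length_le
  have l2 := h2.length_le
  by_cases h : w'.length = u.length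
  · exact Or.inl (h1.eq_of_length h.symm).symm
  · right
    apply h2.eq_of_length
    simp only [List.length_append, List.length_singleton] at l2 ⊢
    omega

private lemma exists_suk {t : Label} {i k : ℕ} {P : Bool} {S : List ℕ → Prop} :
    ∀ n (w : List ℕ), w.length ≤ n → ∀ u, Active t i k P S w → u <+: w →
      ∃ w', Suk t i k P S u w' ∧ w' <+: w := by
  intro n
  induction n with
  | zero =>
      intro w hw u hact hpre
      refine ⟨w, ⟨hact, hpre, ?_⟩, List.prefix_refl w⟩
      intro w' _ _ hp'
      have : w = [] := List.length_eq_zero_iff.mp (Nat.le_zero.mp hw)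
      subst this
      exact List.prefix_nil.mp hp'
  | succ n ih =>
      intro w hw u hact hpre
      by_cases h : ∀ w', Active t i k P S w' → u <+: w' → w' <+: w → w' = w
      · exact ⟨w, ⟨hact, hpre, h⟩, List.prefix_refl w⟩
      · push_neg at h
        obtain ⟨w', ha', hu', hp', hne⟩ := h
        have hlen : w'.length ≤ n := by
          have h1 := hp'.length_le
          have h2 : w'.length ≠ w.length := fun he => hne (hp'.eq_of_length he)
          omega
        obtain ⟨w₀, hsuk, hp₀⟩ := ih w' hlen u ha' hu'
        exact ⟨w₀, hsuk, hp₀.trans hp'⟩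

private lemma sig_step {t : Label} {i k : ℕ} {P : Bool} {S : List ℕ → Prop}
    {s : List ℕ → ℕ → Ordinal} (ht : IsTree t i k)
    (hS : IsStrategy t P S) (hs : SigDef t i k P S s)
    {u : List ℕ} {d : ℕ} (hu : S u) (hv : S (u ++ [d])) :
    sigLe i k P (s (u ++ [d])) (s u) := by
  by_cases hact : Active t i k P S u
  · obtain ⟨j, hpri, hlos, -⟩ := hact.2
    have hd0 : d = 0 := by
      have h1 := (ht.2.1 u _ hpri d).mp (hS.2.1 _ hv)
      simpa [Sym.arity] using h1
    subst hd0
    have hc := hs.1 u j hact hpri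
    left
    refine ⟨j, hlos, ?_, ?_⟩
    · rw [(hc j hlos).2.1 rfl, Ordinal.add_one_eq_succ]
      exact Order.lt_succ _
    · intro j' hj' hlt
      exact ((hc j' hj').1 hlt).symm
  · have hub := (hs.2 u hu hact).1
    by_cases hactv : Active t i k P S (u ++ [d])
    · apply hub
      refine ⟨hactv, List.prefix_append u [d], ?_⟩
      intro w' ha' hu' hp'
      rcases prefix_sandwich hu' hp' with rfl | rfl
      · exact absurd ha' hact
      · rfl
    · apply (hs.2 (u ++ [d]) hv hactv).2
      intro w hw
      apply hub
      obtain ⟨hwact, hwp, hwmin⟩ := hw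
      refine ⟨hwact, (List.prefix_append u [d]).trans hwp, ?_⟩
      intro w' ha' hu' hp'
      rcases List.prefix_or_prefix_of_prefix hp' hwp with h | h
      · rcases prefix_sandwich hu' h with rfl | rfl
        · exact absurd ha' hact
        · exact absurd ha' hactv
      · exact hwmin w' ha' h hp'

/-- Monotonicity of the signature assignment along a strategy: if `u ⪯ w` are
both in the winning strategy `Σ` then `s(u,Σ) ≥_lex s(w,Σ)`. -/
theorem sig_monotone (t : Label) (i k : ℕ) (P : Bool) (S : List ℕ → Prop)
    (s : List ℕ → ℕ → Ordinal)
    (ht : IsTree t i k) (hwf : WellFormed t)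
    (hS : IsWinningStrategy t P S) (hs : SigDef t i k P S s) :
    ∀ u w : List ℕ, S u → S w → u <+: w → sigLe i k P (s w) (s u) := by
  suffices H : ∀ (v u : List ℕ), S (u ++ v) → S u → sigLe i k P (s (u ++ v)) (s u) by
    intro u w hSu hSw hpre
    obtain ⟨v, rfl⟩ := hpre
    exact H v u hSw hSu
  intro v
  induction v with
  | nil => intro u _ _; simpa using sigLe_refl i k P (s u)
  | cons d v' ih =>
      intro u hw hu
      have hw' : S ((u ++ [d]) ++ v') := by simpa using hw
      have hmid : S (u ++ [d]) := strat_prefix_closed hS.1 v' (u ++ [d]) hw'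
      have h1 := ih (u ++ [d]) hw' hmid
      have h2 := sig_step ht hS.1 hs hu hmid
      have h3 := sigLe_trans h1 h2
      simpa using h3

end UnambSig
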